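/- (Fuchs–van de Graaf, upper bound) For any two density operators ρ and σ, F(ρ, σ) ≤ √(1 − (1/4)‖ρ − σ‖₁²), where F(ρ,σ) = ‖√ρ√σ‖₁. -/

import Mathlib

open Matrix
open scoped ComplexOrder
noncomputable section

/-- The positive semidefinite square root (zero if the input is not PSD). -/
def matSqrt {n : Type*} [Fintype n] [DecidableEq n] (A : Matrix n n ℂ) : Matrix n n ℂ :=
  open Classical in
  if h : A.PosSemidef then
    (h.1.eigenvectorUnitary : Matrix n n ℂ) * diagonal ((↑) ∘ (Real.sqrt ·) ∘ h.1.eigenvalues) *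
      (star h.1.eigenvectorUnitary : Matrix n n ℂ)
  else 0

/-- The trace norm `‖A‖₁ = tr √(AᴴA)`. -/
def traceNorm {n : Type*} [Fintype n] [DecidableEq n] (A : Matrix n n ℂ) : ℝ :=
  (matSqrt (Aᴴ * A)).trace.re

/-- The (generalized) fidelity `F(P,Q) = ‖√P √Q‖₁`. -/
def fid {n : Type*} [Fintype n] [DecidableEq n] (P Q : Matrix n n ℂ) : ℝ :=
  traceNorm (matSqrt P * matSqrt Q)

/-- A density operator: positive semidefinite with trace 1. -/
def IsDensity {n : Type*} [Fintype n] [DecidableEq n] (ρ : Matrix n n ℂ) : Prop :=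
  ρ.PosSemidef ∧ ρ.trace = 1

/-!
Let `P` be the spectral projection of `ρ - σ` onto its nonnegative part (the Helstrom measurement),
so that `p - q = ‖ρ - σ‖₁ / 2` for `p = tr Pρ`, `q = tr Pσ`. With `W` the partial isometry of the
polar decomposition of `√ρ√σ`, `F(ρ, σ) = Re tr (Wᴴ √ρ P √σ) + Re tr (Wᴴ √ρ (1 - P) √σ)`, and
Cauchy–Schwarz for the Hilbert–Schmidt inner product bounds the two terms by `√(pq)` and
`√((1 - p)(1 - q))`. This classical fidelity is at most `√(1 - (p - q)²)`.
-/

section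

variable {n : Type*} [Fintype n]

lemma norm_trace_conjTranspose_mul_le (X Y : Matrix n n ℂ) :
    ‖(Xᴴ * Y).trace‖ ≤ √(Xᴴ * X).trace.re * √(Yᴴ * Y).trace.re := by
  have h (A B : Matrix n n ℂ) :
      (Aᴴ * B).trace = inner ℂ (WithLp.toLp 2 (vec A)) (WithLp.toLp 2 (vec B)) := by
    rw [EuclideanSpace.inner_toLp_toLp, dotProduct_comm, ← star_vec_dotProduct_vec]
  have hn (A : Matrix n n ℂ) : ‖WithLp.toLp 2 (vec A)‖ = √(Aᴴ * A).trace.re := by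
    rw [h, ← RCLike.re_to_complex, inner_self_eq_norm_sq, Real.sqrt_sq (norm_nonneg _)]
  rw [h, ← hn, ← hn]
  exact norm_inner_le_norm _ _

lemma re_trace_mul_nonneg_of_isStarProjection {P ρ : Matrix n n ℂ} (hP : IsStarProjection P)
    (hρ : ρ.PosSemidef) : 0 ≤ (P * ρ).trace.re := by
  have h := (hρ.mul_mul_conjTranspose_same P).trace_nonneg
  rw [trace_mul_comm, ← mul_assoc, ← star_eq_conjTranspose, hP.isSelfAdjoint.star_eq,
    hP.isIdempotentElem.eq] at h
  exact (Complex.le_def.1 h).1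

variable [DecidableEq n]

open scoped MatrixOrder

lemma matSqrt_eq_cfcSqrt {A : Matrix n n ℂ} (hA : A.PosSemidef) : matSqrt A = CFC.sqrt A := by
  rw [matSqrt, dif_pos hA, CFC.sqrt_eq_real_sqrt A hA.nonneg, cfcₙ_eq_cfc, hA.1.cfc_eq,
    IsHermitian.cfc, Unitary.conjStarAlgAut_apply]
  rfl

lemma traceNorm_eq_re_trace_abs (A : Matrix n n ℂ) : traceNorm A = (CFC.abs A).trace.re := by
  rw [traceNorm, matSqrt_eq_cfcSqrt (posSemidef_conjTranspose_mul_self A)]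
  rfl

lemma re_trace_mul_mul_conjTranspose_le {Q : Matrix n n ℂ} (hQ : Q ≤ 1) (X : Matrix n n ℂ) :
    (X * Q * Xᴴ).trace.re ≤ (X * Xᴴ).trace.re := by
  have h := star_right_conjugate_le_conjugate hQ X
  rw [mul_one, star_eq_conjTranspose] at h
  have := (sub_nonneg.2 h).posSemidef.trace_nonneg
  rw [trace_sub, sub_nonneg] at this
  exact (Complex.le_def.1 this).1

lemma Matrix.cfc_mul_cfc (A : Matrix n n ℂ) (f g : ℝ → ℝ) :
    cfc f A * cfc g A = cfc (fun x => f x * g x) A :=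
  (cfc_mul f g A (A.finite_real_spectrum.continuousOn f)
    (A.finite_real_spectrum.continuousOn g)).symm

lemma exists_mul_conjTranspose_le_one_trace_abs_eq (A : Matrix n n ℂ) :
    ∃ W : Matrix n n ℂ, W * Wᴴ ≤ 1 ∧ (CFC.abs A).trace = (Wᴴ * A).trace := by
  -- `W = A |A|⁺`, with `x ↦ x⁻¹` (and `0⁻¹ = 0`) giving the pseudo-inverse `|A|⁺`;
  -- `W Wᴴ` is the projection onto the range of `A`.
  set B := CFC.abs A
  set B' := cfc (·⁻¹ : ℝ → ℝ) B with hB'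
  have hB'H : B'ᴴ = B' := (cfc_predicate _ B : IsSelfAdjoint B').star_eq
  have hAA : Aᴴ * A = cfc (fun x : ℝ => x * x) B := by
    rw [← star_eq_conjTranspose, ← CFC.abs_mul_abs A, ← cfc_mul_cfc, cfc_id' ℝ B]
  have h1 : B' * (Aᴴ * A) = B := by
    rw [hAA, hB', cfc_mul_cfc]
    conv_rhs => rw [← cfc_id' ℝ B]
    simp_rw [← mul_assoc, inv_mul_mul_self]
  have h2 : B' * B' * (Aᴴ * A) * (B' * B') = B' * B' := by
    simp only [hAA, hB', cfc_mul_cfc]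
    congr 1
    funext x
    rcases eq_or_ne x 0 with rfl | hx
    · simp
    · field_simp
  refine ⟨A * B', ?_, ?_⟩
  · have hP : IsStarProjection (A * B' * (A * B')ᴴ) := by
      refine ⟨?_, IsSelfAdjoint.mul_star_self _⟩
      rw [IsIdempotentElem, conjTranspose_mul, hB'H]
      calc A * B' * (B' * Aᴴ) * (A * B' * (B' * Aᴴ))
          = A * (B' * B' * (Aᴴ * A) * (B' * B')) * Aᴴ := by simp only [mul_assoc]
        _ = A * B' * (B' * Aᴴ) := by rw [h2]; simp only [mul_assoc]
    exact hP.le_one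
  · rw [conjTranspose_mul, hB'H, mul_assoc, h1]

lemma re_trace_conjTranspose_mul_le {W : Matrix n n ℂ} (hW : W * Wᴴ ≤ 1) (X Y : Matrix n n ℂ) :
    (Wᴴ * (Xᴴ * Y)).trace.re ≤ √(X * Xᴴ).trace.re * √(Yᴴ * Y).trace.re := by
  have hXW : ((X * W)ᴴ * (X * W)).trace = (X * (W * Wᴴ) * Xᴴ).trace := by
    rw [trace_mul_comm]
    simp only [conjTranspose_mul, mul_assoc]
  calc (Wᴴ * (Xᴴ * Y)).trace.re ≤ ‖((X * W)ᴴ * Y).trace‖ := by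
        rw [conjTranspose_mul, mul_assoc]
        exact Complex.re_le_norm _
    _ ≤ √((X * W)ᴴ * (X * W)).trace.re * √(Yᴴ * Y).trace.re :=
        norm_trace_conjTranspose_mul_le _ _
    _ ≤ √(X * Xᴴ).trace.re * √(Yᴴ * Y).trace.re := by
        rw [hXW]
        exact mul_le_mul_of_nonneg_right
          (Real.sqrt_le_sqrt (re_trace_mul_mul_conjTranspose_le hW X)) (Real.sqrt_nonneg _)

lemma re_trace_conjTranspose_mul_mul_le {W Q : Matrix n n ℂ} (hW : W * Wᴴ ≤ 1)
    (hQ : IsStarProjection Q) (R S : Matrix n n ℂ) :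
    (Wᴴ * (R * Q * S)).trace.re ≤ √(Q * (Rᴴ * R)).trace.re * √(Q * (S * Sᴴ)).trace.re := by
  have hQH : Qᴴ = Q := hQ.isSelfAdjoint.star_eq
  have hQQ (X : Matrix n n ℂ) : Q * (Q * X) = Q * X := by rw [← mul_assoc, hQ.isIdempotentElem.eq]
  have hR : ((Q * Rᴴ) * (Q * Rᴴ)ᴴ).trace = (Q * (Rᴴ * R)).trace := by
    rw [conjTranspose_mul, conjTranspose_conjTranspose, hQH,
      show Q * Rᴴ * (R * Q) = Q * (Rᴴ * R) * Q by simp only [mul_assoc], trace_mul_comm, hQQ]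
  have hS : ((Q * S)ᴴ * (Q * S)).trace = (Q * (S * Sᴴ)).trace := by
    rw [conjTranspose_mul, hQH, mul_assoc, hQQ, trace_mul_comm, mul_assoc]
  have h := re_trace_conjTranspose_mul_le hW (Q * Rᴴ) (Q * S)
  rw [hR, hS, conjTranspose_mul, conjTranspose_conjTranspose, hQH, mul_assoc, hQQ] at h
  simpa only [mul_assoc] using h

lemma traceNorm_mul_le_of_isStarProjection {P : Matrix n n ℂ} (hP : IsStarProjection P)
    (R S : Matrix n n ℂ) :
    traceNorm (R * S) ≤ √(P * (Rᴴ * R)).trace.re * √(P * (S * Sᴴ)).trace.re +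
      √((1 - P) * (Rᴴ * R)).trace.re * √((1 - P) * (S * Sᴴ)).trace.re := by
  obtain ⟨W, hW, htr⟩ := exists_mul_conjTranspose_le_one_trace_abs_eq (R * S)
  have hsplit : R * S = R * P * S + R * (1 - P) * S := by noncomm_ring
  rw [traceNorm_eq_re_trace_abs, htr, hsplit, mul_add, trace_add, Complex.add_re]
  exact add_le_add (re_trace_conjTranspose_mul_mul_le hW hP R S)
    (re_trace_conjTranspose_mul_mul_le hW hP.one_sub R S)

lemma fid_le_of_isStarProjection {ρ σ P : Matrix n n ℂ} (hρ : ρ.PosSemidef) (hσ : σ.PosSemidef)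
    (hP : IsStarProjection P) :
    fid ρ σ ≤ √(P * ρ).trace.re * √(P * σ).trace.re +
      √((1 - P) * ρ).trace.re * √((1 - P) * σ).trace.re := by
  have hρ' : (CFC.sqrt ρ)ᴴ * CFC.sqrt ρ = ρ := by
    rw [← star_eq_conjTranspose, (CFC.sqrt_nonneg ρ).isSelfAdjoint.star_eq,
      CFC.sqrt_mul_sqrt_self ρ hρ.nonneg]
  have hσ' : CFC.sqrt σ * (CFC.sqrt σ)ᴴ = σ := by
    rw [← star_eq_conjTranspose, (CFC.sqrt_nonneg σ).isSelfAdjoint.star_eq,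
      CFC.sqrt_mul_sqrt_self σ hσ.nonneg]
  have h := traceNorm_mul_le_of_isStarProjection hP (CFC.sqrt ρ) (CFC.sqrt σ)
  rwa [hρ', hσ', ← matSqrt_eq_cfcSqrt hρ, ← matSqrt_eq_cfcSqrt hσ] at h

lemma exists_isStarProjection_re_trace_mul_eq {Δ : Matrix n n ℂ} (hΔ : Δ.IsHermitian)
    (h0 : Δ.trace = 0) :
    ∃ P : Matrix n n ℂ, IsStarProjection P ∧ (P * Δ).trace.re = traceNorm Δ / 2 := by
  set f : ℝ → ℝ := fun x => if 0 ≤ x then 1 else 0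
  refine ⟨cfc f Δ, ⟨?_, cfc_predicate f Δ⟩, ?_⟩
  · rw [IsIdempotentElem, cfc_mul_cfc]
    congr 1
    funext x
    by_cases hx : 0 ≤ x <;> simp [f, hx]
  · have hPΔ : cfc f Δ * Δ = Δ⁺ := by
      nth_rw 2 [← cfc_id' ℝ Δ]
      rw [cfc_mul_cfc, CFC.posPart_def, cfcₙ_eq_cfc]
      congr 1
      funext x
      by_cases hx : 0 ≤ x
      · simp [f, hx]
      · simp [f, hx, posPart_eq_zero.2 (not_le.1 hx).le]
    have habs := congrArg trace (CFC.abs_add_self Δ)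
    rw [trace_add, h0, add_zero, trace_smul] at habs
    rw [hPΔ, traceNorm_eq_re_trace_abs, habs]
    simp

end

lemma sqrt_mul_sqrt_add_sqrt_mul_sqrt_le {p q : ℝ} (hp₀ : 0 ≤ p) (hp₁ : p ≤ 1) (hq₀ : 0 ≤ q)
    (hq₁ : q ≤ 1) : √p * √q + √(1 - p) * √(1 - q) ≤ √(1 - (p - q) ^ 2) := by
  -- the squared left side is `1 - (p - q)² - (√(p(1 - p)) - √(q(1 - q)))²`
  apply Real.le_sqrt_of_sq_le
  nlinarith [sq_nonneg (√p * √(1 - p) - √q * √(1 - q)), Real.sq_sqrt hp₀, Real.sq_sqrt hq₀,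
    Real.sq_sqrt (sub_nonneg.2 hp₁), Real.sq_sqrt (sub_nonneg.2 hq₁)]

theorem fuchs_van_de_graaf_upper {n : Type*} [Fintype n] [DecidableEq n]
    (ρ σ : Matrix n n ℂ) (hρ : IsDensity ρ) (hσ : IsDensity σ) :
    fid ρ σ ≤ Real.sqrt (1 - (1/4) * (traceNorm (ρ - σ))^2) := by
  obtain ⟨hρ, hρ₁⟩ := hρ
  obtain ⟨hσ, hσ₁⟩ := hσ
  obtain ⟨P, hP, hPΔ⟩ := exists_isStarProjection_re_trace_mul_eq (hρ.1.sub hσ.1)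
    (by rw [trace_sub, hρ₁, hσ₁, sub_self])
  have hcompl {τ : Matrix n n ℂ} (hτ : τ.trace = 1) :
      ((1 - P) * τ).trace.re = 1 - (P * τ).trace.re := by
    rw [sub_mul, one_mul, trace_sub, hτ, Complex.sub_re, Complex.one_re]
  have hpq : (P * ρ).trace.re - (P * σ).trace.re = traceNorm (ρ - σ) / 2 := by
    rw [← hPΔ, mul_sub, trace_sub, Complex.sub_re]
  have hbounds {τ : Matrix n n ℂ} (hτ : τ.PosSemidef) (hτ₁ : τ.trace = 1) :
      0 ≤ (P * τ).trace.re ∧ (P * τ).trace.re ≤ 1 := by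
    have h := re_trace_mul_nonneg_of_isStarProjection hP.one_sub hτ
    rw [hcompl hτ₁] at h
    exact ⟨re_trace_mul_nonneg_of_isStarProjection hP hτ, by linarith⟩
  calc fid ρ σ
      ≤ √(P * ρ).trace.re * √(P * σ).trace.re +
          √(1 - (P * ρ).trace.re) * √(1 - (P * σ).trace.re) := by
        simpa only [hcompl hρ₁, hcompl hσ₁] using fid_le_of_isStarProjection hρ hσ hP
    _ ≤ √(1 - ((P * ρ).trace.re - (P * σ).trace.re) ^ 2) :=
        sqrt_mul_sqrt_add_sqrt_mul_sqrt_le (hbounds hρ hρ₁).1 (hbounds hρ hρ₁).2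
          (hbounds hσ hσ₁).1 (hbounds hσ hσ₁).2
    _ = _ := by rw [hpq]; ring_nf
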